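/- Let F be a forest of size n and let G be obtained from F by relabeling a single node u. Then ted(F_hld, G_hld) <= O(log n)·ted(F,G); in particular, G_hld can be obtained from F_hld by at most O(log n) node relabelings. -/
import Mathlib


/-- Rooted ordered labeled trees. -/
inductive LTree (α : Type) : Type where
  | node : α → List (LTree α) → LTree α

mutual
  /-- Number of nodes of a labeled tree. -/
  def tsize {α : Type} : LTree α → ℕ
    | .node _ ts => 1 + fsize ts
  /-- Number of nodes of a labeled forest. -/
  def fsize {α : Type} : List (LTree α) → ℕ
    | [] => 0
    | t :: ts => tsize t + fsize ts
end

mutual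
  /-- Parenthesis representation of a tree: `(_a · str(children) · )_a`. -/
  def pstr {α : Type} : LTree α → List (Bool × α)
    | .node a ts => (true, a) :: (pforest ts ++ [(false, a)])
  /-- Parenthesis representation of a forest. -/
  def pforest {α : Type} : List (LTree α) → List (Bool × α)
    | [] => []
    | t :: ts => pstr t ++ pforest ts
end

mutual
  /-- The pair `(o(u), c(u))` of positions, in the parenthesis representation,
  of the node `u` of a tree addressed by a list of child indices. -/
  def tpos {α : Type} : LTree α → List ℕ → Option (ℕ × ℕ)
    | t, [] => some (0, (pstr t).length - 1)
    | .node _ ts, k :: addr => (fpos ts (k :: addr)).map (fun p => (p.1 + 1, p.2 + 1))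
  /-- The pair `(o(u), c(u))` of positions of the node of a forest addressed by a
  nonempty list of child indices (the first index selects the tree). -/
  def fpos {α : Type} : List (LTree α) → List ℕ → Option (ℕ × ℕ)
    | [], _ => none
    | _ :: _, [] => none
    | t :: _, 0 :: addr => tpos t addr
    | t :: ts, (k + 1) :: addr =>
        (fpos ts (k :: addr)).map (fun p => (p.1 + (pstr t).length, p.2 + (pstr t).length))
end

mutual
  /-- The subtree of a tree at a given address. -/
  def tSub {α : Type} : LTree α → List ℕ → Option (LTree α)
    | t, [] => some t
    | .node _ ts, k :: addr => fSub ts (k :: addr)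
  /-- The subtree of a forest at a given (nonempty) address. -/
  def fSub {α : Type} : List (LTree α) → List ℕ → Option (LTree α)
    | [], _ => none
    | _ :: _, [] => none
    | t :: _, 0 :: addr => tSub t addr
    | _ :: ts, (k + 1) :: addr => fSub ts (k :: addr)
end

mutual
  /-- Embed a tree into trees labeled by `Option α` (no sentinels). -/
  def emb {α : Type} : LTree α → LTree (Option α)
    | .node a ts => .node (some a) (femb ts)
  def femb {α : Type} : List (LTree α) → List (LTree (Option α))
    | [] => []
    | t :: ts => emb t :: femb ts
end

/-- Replace each heavy child (heavy depth `n` equal to the parent's) by a sentinel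
node labeled `none`; keep light children verbatim. -/
def lightChildren {α : Type} (n : ℕ) : List (LTree α) → List (LTree (Option α))
  | [] => []
  | t :: ts =>
      (if Nat.log 2 (tsize t) = n then LTree.node none [] else emb t) ::
        lightChildren n ts

/-- The light subtree `F'(v)` : the subtree rooted at `v` with the subtree of its
heavy child (if any) replaced by a single sentinel node. -/
def lightSub {α : Type} : LTree α → LTree (Option α)
  | .node a ts => .node (some a) (lightChildren (Nat.log 2 (1 + fsize ts)) ts)

mutual
  /-- The modified (heavy-light) labeling: each node `v` is relabeled by the pair
  `(F'(v), heavy depth of F(v))`. -/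
  def hldTree {α : Type} : LTree α → LTree (LTree (Option α) × ℕ)
    | .node a ts =>
        .node (lightSub (.node a ts), Nat.log 2 (1 + fsize ts)) (hldForest ts)
  /-- The modified labeling of a forest. -/
  def hldForest {α : Type} : List (LTree α) → List (LTree (LTree (Option α) × ℕ))
    | [] => []
    | t :: ts => hldTree t :: hldForest ts
end

/-- One node edit on a forest: relabel, delete, or insert a node, at any depth. -/
inductive FStep {α : Type} : List (LTree α) → List (LTree α) → Prop where
  | relabel (pre post ts : List (LTree α)) (a b : α) :
      FStep (pre ++ LTree.node a ts :: post) (pre ++ LTree.node b ts :: post)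
  | delete (pre post ts : List (LTree α)) (a : α) :
      FStep (pre ++ LTree.node a ts :: post) (pre ++ ts ++ post)
  | insert (pre mid post : List (LTree α)) (a : α) :
      FStep (pre ++ mid ++ post) (pre ++ LTree.node a mid :: post)
  | congr (pre post ts ts' : List (LTree α)) (a : α) :
      FStep ts ts' → FStep (pre ++ LTree.node a ts :: post) (pre ++ LTree.node a ts' :: post)

/-- `FEdits n F G` : `G` can be obtained from `F` by `n` node edits. -/
inductive FEdits {α : Type} : ℕ → List (LTree α) → List (LTree α) → Prop where
  | refl (F : List (LTree α)) : FEdits 0 F F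
  | step {n : ℕ} {F G H : List (LTree α)} :
      FStep F G → FEdits n G H → FEdits (n + 1) F H

/-- Tree edit distance between forests. -/
noncomputable def ted {α : Type} (F G : List (LTree α)) : ℕ :=
  sInf {n | FEdits n F G}

/-- A single node relabeling, at any depth of a forest. -/
inductive ROnly {α : Type} : List (LTree α) → List (LTree α) → Prop where
  | here (pre post ts : List (LTree α)) (a b : α) :
      ROnly (pre ++ LTree.node a ts :: post) (pre ++ LTree.node b ts :: post)
  | congr (pre post ts ts' : List (LTree α)) (a : α) :
      ROnly ts ts' → ROnly (pre ++ LTree.node a ts :: post) (pre ++ LTree.node a ts' :: post)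

/-- `REdits m F G` : `G` is obtained from `F` by `m` node relabelings. -/
inductive REdits {α : Type} : ℕ → List (LTree α) → List (LTree α) → Prop where
  | refl (F : List (LTree α)) : REdits 0 F F
  | step {m : ℕ} {F G H : List (LTree α)} :
      ROnly F G → REdits m G H → REdits (m + 1) F H

theorem fsize_append {α : Type} (xs ys : List (LTree α)) :
    fsize (xs ++ ys) = fsize xs + fsize ys := by
  induction xs with
  | nil => simp [fsize]
  | cons t ts ih => simp [fsize, ih]; omega

theorem hldForest_append {α : Type} (xs ys : List (LTree α)) :
    hldForest (xs ++ ys) = hldForest xs ++ hldForest ys := by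
  induction xs with
  | nil => simp [hldForest]
  | cons t ts ih => simp [hldForest, ih]

theorem lightChildren_append {α : Type} (n : ℕ) (xs ys : List (LTree α)) :
    lightChildren n (xs ++ ys) = lightChildren n xs ++ lightChildren n ys := by
  induction xs with
  | nil => simp [lightChildren]
  | cons t ts ih => simp [lightChildren, ih]

theorem ronly_fstep {α : Type} {F G : List (LTree α)} (h : ROnly F G) : FStep F G := by
  induction h with
  | here pre post ts a b => exact FStep.relabel pre post ts a b
  | congr pre post ts ts' a _ ih => exact FStep.congr pre post ts ts' a ih

theorem redits_fedits {α : Type} {m : ℕ} {F G : List (LTree α)} (h : REdits m F G) :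
    FEdits m F G := by
  induction h with
  | refl F => exact FEdits.refl F
  | step h1 _ ih => exact FEdits.step (ronly_fstep h1) ih

theorem redits_lift {α : Type} (pre post : List (LTree α)) (L : α) {m : ℕ}
    {X Y : List (LTree α)} (h : REdits m X Y) :
    REdits m (pre ++ LTree.node L X :: post) (pre ++ LTree.node L Y :: post) := by
  induction h with
  | refl F => exact REdits.refl _
  | step h1 _ ih => exact REdits.step (ROnly.congr pre post _ _ L h1) ih

theorem fedits_zero {α : Type} {F G : List (LTree α)} (h : FEdits 0 F G) : F = G := by
  cases h; rfl

theorem main_lemma {α : Type} {F G : List (LTree α)} (h : ROnly F G) :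
    ∃ pre t post t', F = pre ++ t :: post ∧ G = pre ++ t' :: post ∧
      tsize t = tsize t' ∧
      ∃ m ≤ Nat.log 2 (tsize t) + 1, REdits m (hldForest F) (hldForest G) := by
  induction h with
  | here pre post ts a b =>
    refine ⟨pre, .node a ts, post, .node b ts, rfl, rfl, rfl, 1, by omega, ?_⟩
    have e1 : hldForest (pre ++ LTree.node a ts :: post)
        = hldForest pre ++ LTree.node (lightSub (.node a ts), Nat.log 2 (1 + fsize ts))
            (hldForest ts) :: hldForest post := by
      rw [hldForest_append]; rfl
    have e2 : hldForest (pre ++ LTree.node b ts :: post)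
        = hldForest pre ++ LTree.node (lightSub (.node b ts), Nat.log 2 (1 + fsize ts))
            (hldForest ts) :: hldForest post := by
      rw [hldForest_append]; rfl
    rw [e1, e2]
    exact REdits.step (ROnly.here _ _ _ _ _) (REdits.refl _)
  | congr pre post ts ts' a h ih =>
    obtain ⟨p2, t, q2, t', hts, hts', hsize, m, hm, hch⟩ := ih
    subst hts hts'
    have hfs : fsize (p2 ++ t' :: q2) = fsize (p2 ++ t :: q2) := by
      simp [fsize_append, fsize, hsize]
    set n := Nat.log 2 (1 + fsize (p2 ++ t :: q2)) with hn
    have htle : tsize t ≤ 1 + fsize (p2 ++ t :: q2) := by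
      simp [fsize_append, fsize]; omega
    have hle : Nat.log 2 (tsize t) ≤ n := Nat.log_mono_right htle
    have etsz : tsize (LTree.node a (p2 ++ t :: q2))
        = tsize (LTree.node a (p2 ++ t' :: q2)) := by
      simp [tsize, hfs]
    have eF : hldForest (pre ++ LTree.node a (p2 ++ t :: q2) :: post)
        = hldForest pre ++ LTree.node (lightSub (.node a (p2 ++ t :: q2)), n)
            (hldForest (p2 ++ t :: q2)) :: hldForest post := by
      rw [hldForest_append]; rfl
    have eG : hldForest (pre ++ LTree.node a (p2 ++ t' :: q2) :: post)
        = hldForest pre ++ LTree.node (lightSub (.node a (p2 ++ t' :: q2)), n)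
            (hldForest (p2 ++ t' :: q2)) :: hldForest post := by
      rw [hldForest_append]
      have : Nat.log 2 (1 + fsize (p2 ++ t' :: q2)) = n := by rw [hfs]
      simp [hldForest, hldTree, this]
    by_cases hhv : Nat.log 2 (tsize t) = n
    · -- heavy child edited: root label unchanged
      have heq : lightSub (LTree.node a (p2 ++ t :: q2))
          = lightSub (LTree.node a (p2 ++ t' :: q2)) := by
        simp only [lightSub, ← hn]
        rw [hfs, ← hn, lightChildren_append, lightChildren_append]
        simp [lightChildren, ← hsize, hhv]
      refine ⟨pre, .node a (p2 ++ t :: q2), post, .node a (p2 ++ t' :: q2), rfl, rfl,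
        etsz, m, ?_, ?_⟩
      · simp only [tsize, ← hn]; omega
      · rw [eF, eG, heq]
        exact redits_lift _ _ _ hch
    · -- light child edited: one extra root relabel
      have hlt : Nat.log 2 (tsize t) < n := lt_of_le_of_ne hle hhv
      refine ⟨pre, .node a (p2 ++ t :: q2), post, .node a (p2 ++ t' :: q2), rfl, rfl,
        etsz, m + 1, ?_, ?_⟩
      · simp only [tsize, ← hn]; omega
      · rw [eF, eG]
        exact REdits.step (ROnly.here _ _ _ _ _)
          (redits_lift _ _ _ hch)

/-- If `G` is obtained from a forest `F` of size `n` by relabeling a single node,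
then `ted(F_hld, G_hld) ≤ O(log n) · ted(F,G)`; in particular, `G_hld` is obtained
from `F_hld` by at most `O(log n)` node relabelings. -/
theorem stmt11 :
    ∃ C : ℕ, ∀ (α : Type) (F G : List (LTree α)),
      ROnly F G →
      ted (hldForest F) (hldForest G) ≤ C * (Nat.log 2 (fsize F) + 1) * ted F G ∧
      ∃ m ≤ C * (Nat.log 2 (fsize F) + 1), REdits m (hldForest F) (hldForest G) := by
  refine ⟨1, fun α F G h => ?_⟩
  obtain ⟨pre, t, post, t', hF, hG, _, m, hm, hch⟩ := main_lemma h
  have htle : tsize t ≤ fsize F := by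
    subst hF; simp [fsize_append, fsize]; omega
  have hmb : m ≤ Nat.log 2 (fsize F) + 1 :=
    le_trans hm (by have := Nat.log_mono_right (b := 2) htle; omega)
  constructor
  · -- ted bound
    have h1 : FEdits 1 F G := FEdits.step (ronly_fstep h) (FEdits.refl G)
    have hne : {n | FEdits n F G}.Nonempty := ⟨1, h1⟩
    have hted : ted (hldForest F) (hldForest G) ≤ m :=
      Nat.sInf_le (redits_fedits hch)
    rcases Nat.eq_zero_or_pos (ted F G) with h0 | hpos
    · have hmem : FEdits 0 F G := by
        have := Nat.sInf_mem hne
        rwa [show sInf {n | FEdits n F G} = ted F G from rfl, h0] at this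
      have : F = G := fedits_zero hmem
      subst this
      have : ted (hldForest F) (hldForest F) = 0 :=
        Nat.le_zero.mp (Nat.sInf_le (FEdits.refl _))
      simp [this]
    · calc ted (hldForest F) (hldForest G) ≤ m := hted
        _ ≤ 1 * (Nat.log 2 (fsize F) + 1) * 1 := by omega
        _ ≤ 1 * (Nat.log 2 (fsize F) + 1) * ted F G := by
              exact Nat.mul_le_mul_left _ hpos
  · exact ⟨m, by omega, hch⟩
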